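/- Soundness of the AML proof system for global semantic consequence: if Γ ⊢ φ in the Hilbert system 𝓗 (axioms: propositional tautologies, ∃-quantifier axiom φ[y/x] → ∃x.φ when x free for y, Propagation_⊥/∨/∃, Pre-Fixpoint, Existence ∃x.x, Singleton Variable; rules: modus ponens, ∃-quantifier rule, framing, set variable substitution, Knaster–Tarski), then Γ ⊨ φ globally, i.e., every structure satisfying all of Γ (under all valuations) satisfies φ under all valuations. -/

import Mathlib

inductive Pattern (σ : Type) : Type where
  | evar : ℕ → Pattern σ
  | svar : ℕ → Pattern σ
  | const : σ → Pattern σ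
  | app : Pattern σ → Pattern σ → Pattern σ
  | imp : Pattern σ → Pattern σ → Pattern σ
  | ex : ℕ → Pattern σ → Pattern σ
  | mu : ℕ → Pattern σ → Pattern σ

structure AMLStructure (σ : Type) (A : Type) : Type where
  app : A → A → Set A
  interp : σ → Set A

def AMLStructure.sapp {σ A : Type} (S : AMLStructure σ A) (B C : Set A) : Set A :=
  ⋃ b ∈ B, ⋃ c ∈ C, S.app b c

structure Val (A : Type) : Type where
  e : ℕ → A
  s : ℕ → Set A

def Val.updE {A : Type} (v : Val A) (x : ℕ) (a : A) : Val A :=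
  ⟨fun y => if y = x then a else v.e y, v.s⟩

def Val.updS {A : Type} (v : Val A) (X : ℕ) (B : Set A) : Val A :=
  ⟨v.e, fun Y => if Y = X then B else v.s Y⟩

def eval {σ A : Type} (S : AMLStructure σ A) : Pattern σ → Val A → Set A
  | .evar n, v => {v.e n}
  | .svar n, v => v.s n
  | .const c, _ => S.interp c
  | .app φ ψ, v => S.sapp (eval S φ v) (eval S ψ v)
  | .imp φ ψ, v => (eval S φ v \ eval S ψ v)ᶜ
  | .ex x φ, v => ⋃ a : A, eval S φ (v.updE x a)
  | .mu X φ, v => ⋂₀ {B | eval S φ (v.updS X B) ⊆ B}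

def fv {σ : Type} : Pattern σ → Set (ℕ ⊕ ℕ)
  | .evar n => {Sum.inl n}
  | .svar n => {Sum.inr n}
  | .const _ => ∅
  | .app φ ψ => fv φ ∪ fv ψ
  | .imp φ ψ => fv φ ∪ fv ψ
  | .ex x φ => fv φ \ {Sum.inl x}
  | .mu X φ => fv φ \ {Sum.inr X}

def botP {σ : Type} : Pattern σ := .mu 0 (.svar 0)
def negP {σ : Type} (φ : Pattern σ) : Pattern σ := .imp φ botP
def topP {σ : Type} : Pattern σ := negP botP
def orP {σ : Type} (φ ψ : Pattern σ) : Pattern σ := .imp (negP φ) ψ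
def andP {σ : Type} (φ ψ : Pattern σ) : Pattern σ := negP (orP (negP φ) (negP ψ))
def iffP {σ : Type} (φ ψ : Pattern σ) : Pattern σ := andP (.imp φ ψ) (.imp ψ φ)
def allP {σ : Type} (x : ℕ) (φ : Pattern σ) : Pattern σ := negP (.ex x (negP φ))

def substS {σ : Type} (δ : Pattern σ) (X : ℕ) : Pattern σ → Pattern σ
  | .evar n => .evar n
  | .svar Y => if Y = X then δ else .svar Y
  | .const c => .const c
  | .app φ ψ => .app (substS δ X φ) (substS δ X ψ)
  | .imp φ ψ => .imp (substS δ X φ) (substS δ X ψ)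
  | .ex x φ => .ex x (substS δ X φ)
  | .mu Z φ => if Z = X then .mu Z φ else .mu Z (substS δ X φ)

def substE {σ : Type} (δ : Pattern σ) (x : ℕ) : Pattern σ → Pattern σ
  | .evar n => if n = x then δ else .evar n
  | .svar Y => .svar Y
  | .const c => .const c
  | .app φ ψ => .app (substE δ x φ) (substE δ x ψ)
  | .imp φ ψ => .imp (substE δ x φ) (substE δ x ψ)
  | .ex z φ => if z = x then .ex z φ else .ex z (substE δ x φ)
  | .mu Z φ => .mu Z (substE δ x φ)

def freeForS {σ : Type} (δ : Pattern σ) (X : ℕ) : Pattern σ → Prop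
  | .evar _ => True
  | .svar _ => True
  | .const _ => True
  | .app φ ψ => freeForS δ X φ ∧ freeForS δ X ψ
  | .imp φ ψ => freeForS δ X φ ∧ freeForS δ X ψ
  | .ex z φ => (Sum.inr X ∈ fv φ → Sum.inl z ∉ fv δ) ∧ freeForS δ X φ
  | .mu Z φ => Z = X ∨ ((Sum.inr X ∈ fv φ → Sum.inr Z ∉ fv δ) ∧ freeForS δ X φ)

def freeForE {σ : Type} (δ : Pattern σ) (x : ℕ) : Pattern σ → Prop
  | .evar _ => True
  | .svar _ => True
  | .const _ => True
  | .app φ ψ => freeForE δ x φ ∧ freeForE δ x ψ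
  | .imp φ ψ => freeForE δ x φ ∧ freeForE δ x ψ
  | .ex z φ => z = x ∨ ((Sum.inl x ∈ fv φ → Sum.inl z ∉ fv δ) ∧ freeForE δ x φ)
  | .mu Z φ => (Sum.inl x ∈ fv φ → Sum.inr Z ∉ fv δ) ∧ freeForE δ x φ

def subb {σ : Type} (x y : ℕ) : Pattern σ → Pattern σ
  | .evar n => .evar n
  | .svar Y => .svar Y
  | .const c => .const c
  | .app φ ψ => .app (subb x y φ) (subb x y ψ)
  | .imp φ ψ => .imp (subb x y φ) (subb x y ψ)
  | .ex z φ => if z = x then .ex y (substE (.evar y) x (subb x y φ)) else .ex z (subb x y φ)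
  | .mu Z φ => .mu Z (subb x y φ)

def occursE {σ : Type} (y : ℕ) : Pattern σ → Prop
  | .evar n => n = y
  | .svar _ => False
  | .const _ => False
  | .app φ ψ => occursE y φ ∨ occursE y ψ
  | .imp φ ψ => occursE y φ ∨ occursE y ψ
  | .ex z φ => z = y ∨ occursE y φ
  | .mu _ φ => occursE y φ

mutual
def positiveIn {σ : Type} (X : ℕ) : Pattern σ → Prop
  | .evar _ => True
  | .svar _ => True
  | .const _ => True
  | .app φ ψ => positiveIn X φ ∧ positiveIn X ψ
  | .imp φ ψ => negativeIn X φ ∧ positiveIn X ψ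
  | .ex _ φ => positiveIn X φ
  | .mu Z φ => Z = X ∨ positiveIn X φ

def negativeIn {σ : Type} (X : ℕ) : Pattern σ → Prop
  | .evar _ => True
  | .svar Y => Y ≠ X
  | .const _ => True
  | .app φ ψ => negativeIn X φ ∧ negativeIn X ψ
  | .imp φ ψ => positiveIn X φ ∧ negativeIn X ψ
  | .ex _ φ => negativeIn X φ
  | .mu Z φ => Z = X ∨ negativeIn X φ
end

def nuP {σ : Type} (X : ℕ) (φ : Pattern σ) : Pattern σ :=
  negP (.mu X (negP (substS (negP (.svar X)) X φ)))

inductive Ctx (σ : Type) : Type where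
  | hole : Ctx σ
  | appL : Ctx σ → Pattern σ → Ctx σ
  | appR : Pattern σ → Ctx σ → Ctx σ

def Ctx.plug {σ : Type} : Ctx σ → Pattern σ → Pattern σ
  | .hole, δ => δ
  | .appL C ψ, δ => .app (C.plug δ) ψ
  | .appR ψ C, δ => .app ψ (C.plug δ)

def IsPropEval {σ A : Type} (F : Pattern σ → Set A) : Prop :=
  F botP = ∅ ∧ ∀ φ ψ : Pattern σ, F (Pattern.imp φ ψ) = (F φ \ F ψ)ᶜ

def Tautology {σ : Type} (φ : Pattern σ) : Prop :=
  ∀ (A : Type), Nonempty A → ∀ F : Pattern σ → Set A, IsPropEval F → F φ = Set.univ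

inductive Proof {σ : Type} (Γ : Set (Pattern σ)) : Pattern σ → Prop where
  | hyp {φ : Pattern σ} : φ ∈ Γ → Proof Γ φ
  | taut {φ : Pattern σ} : Tautology φ → Proof Γ φ
  | exQuant {φ : Pattern σ} {x y : ℕ} :
      freeForE (Pattern.evar y) x φ →
      Proof Γ (.imp (substE (Pattern.evar y) x φ) (.ex x φ))
  | propBotL {φ : Pattern σ} : Proof Γ (.imp (.app φ botP) botP)
  | propBotR {φ : Pattern σ} : Proof Γ (.imp (.app botP φ) botP)
  | propOrL {φ ψ χ : Pattern σ} :
      Proof Γ (.imp (.app (orP φ ψ) χ) (orP (.app φ χ) (.app ψ χ)))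
  | propOrR {φ ψ χ : Pattern σ} :
      Proof Γ (.imp (.app χ (orP φ ψ)) (orP (.app χ φ) (.app χ ψ)))
  | propExL {φ ψ : Pattern σ} {x : ℕ} : Sum.inl x ∉ fv ψ →
      Proof Γ (.imp (.app (.ex x φ) ψ) (.ex x (.app φ ψ)))
  | propExR {φ ψ : Pattern σ} {x : ℕ} : Sum.inl x ∉ fv ψ →
      Proof Γ (.imp (.app ψ (.ex x φ)) (.ex x (.app ψ φ)))
  | preFixpoint {φ : Pattern σ} {X : ℕ} : positiveIn X φ → freeForS (.mu X φ) X φ →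
      Proof Γ (.imp (substS (.mu X φ) X φ) (.mu X φ))
  | existence {x : ℕ} : Proof Γ (.ex x (.evar x))
  | singleton {C₁ C₂ : Ctx σ} {φ : Pattern σ} {x : ℕ} :
      Proof Γ (negP (andP (C₁.plug (andP (.evar x) φ)) (C₂.plug (andP (.evar x) (negP φ)))))
  | mp {φ ψ : Pattern σ} : Proof Γ φ → Proof Γ (.imp φ ψ) → Proof Γ ψ
  | exRule {φ ψ : Pattern σ} {x : ℕ} : Sum.inl x ∉ fv ψ →
      Proof Γ (.imp φ ψ) → Proof Γ (.imp (.ex x φ) ψ)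
  | framingL {φ ψ χ : Pattern σ} :
      Proof Γ (.imp φ ψ) → Proof Γ (.imp (.app φ χ) (.app ψ χ))
  | framingR {φ ψ χ : Pattern σ} :
      Proof Γ (.imp φ ψ) → Proof Γ (.imp (.app χ φ) (.app χ ψ))
  | svSubst {φ ψ : Pattern σ} {X : ℕ} : freeForS ψ X φ →
      Proof Γ φ → Proof Γ (substS ψ X φ)
  | knasterTarski {φ ψ : Pattern σ} {X : ℕ} : freeForS ψ X φ →
      Proof Γ (.imp (substS ψ X φ) ψ) → Proof Γ (.imp (.mu X φ) ψ)

/-!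
Soundness is proved by induction on derivations, in a fixed structure. Besides routine set
algebra, three semantic facts carry the argument: the coincidence lemma (the value of a pattern
depends only on its free variables); the substitution lemmas (if `δ` is free for `X` in `φ`, the
value of `φ[δ/X]` is the value of `φ` with `X` interpreted as the value of `δ`, and likewise for
element variables); and monotonicity in `X` of a pattern in which `X` occurs only positively,
which makes the value of `μX.φ` the least fixpoint of a monotone map, hence a pre-fixpoint.
-/

open Set

namespace Val

variable {A : Type}

@[simp] lemma updE_e (v : Val A) (x : ℕ) (a : A) (n : ℕ) :
    (v.updE x a).e n = if n = x then a else v.e n := rfl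

@[simp] lemma updS_s (v : Val A) (X : ℕ) (B : Set A) (N : ℕ) :
    (v.updS X B).s N = if N = X then B else v.s N := rfl

lemma updE_comm (v : Val A) {x z : ℕ} (h : x ≠ z) (a b : A) :
    (v.updE x a).updE z b = (v.updE z b).updE x a := by
  simp only [updE, mk.injEq, and_true]
  funext y
  split_ifs <;> simp_all

lemma updS_comm (v : Val A) {X Z : ℕ} (h : X ≠ Z) (B C : Set A) :
    (v.updS X B).updS Z C = (v.updS Z C).updS X B := by
  simp only [updS, mk.injEq, true_and]
  funext Y
  split_ifs <;> simp_all

end Val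

namespace AMLStructure

variable {σ A : Type} (S : AMLStructure σ A)

lemma sapp_mono {B B' C C' : Set A} (hB : B ⊆ B') (hC : C ⊆ C') :
    S.sapp B C ⊆ S.sapp B' C' :=
  biUnion_mono hB fun _ _ => biUnion_mono hC fun _ _ => subset_rfl

@[simp] lemma sapp_empty_left (C : Set A) : S.sapp ∅ C = ∅ := by
  simp [sapp]

@[simp] lemma sapp_empty_right (B : Set A) : S.sapp B ∅ = ∅ := by
  simp [sapp]

lemma sapp_union_left (B B' C : Set A) :
    S.sapp (B ∪ B') C = S.sapp B C ∪ S.sapp B' C :=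
  biUnion_union _ _ _

lemma sapp_union_right (B C C' : Set A) :
    S.sapp B (C ∪ C') = S.sapp B C ∪ S.sapp B C' := by
  simp only [sapp, biUnion_union, iUnion_union_distrib]

lemma sapp_iUnion_left {ι : Sort*} (B : ι → Set A) (C : Set A) :
    S.sapp (⋃ i, B i) C = ⋃ i, S.sapp (B i) C :=
  biUnion_iUnion _ _

lemma sapp_iUnion_right {ι : Sort*} (B : Set A) (C : ι → Set A) :
    S.sapp B (⋃ i, C i) = ⋃ i, S.sapp B (C i) := by
  ext
  simp only [sapp, mem_iUnion, exists_prop]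
  exact ⟨fun ⟨b, hb, c, ⟨i, hc⟩, h⟩ => ⟨i, b, hb, c, hc, h⟩,
    fun ⟨i, b, hb, c, hc, h⟩ => ⟨b, hb, c, ⟨i, hc⟩, h⟩⟩

end AMLStructure

section Semantics

variable {σ A : Type} (S : AMLStructure σ A)

@[simp] lemma eval_botP (v : Val A) : eval S (botP : Pattern σ) v = ∅ :=
  eq_empty_of_subset_empty <| sInter_subset_of_mem (by simp [eval])

@[simp] lemma eval_negP (φ : Pattern σ) (v : Val A) : eval S (negP φ) v = (eval S φ v)ᶜ := by
  rw [negP, eval, eval_botP, sdiff_empty]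

@[simp] lemma eval_orP (φ ψ : Pattern σ) (v : Val A) :
    eval S (orP φ ψ) v = eval S φ v ∪ eval S ψ v := by
  rw [orP, eval, eval_negP, sdiff_eq, compl_inter, compl_compl, compl_compl]

@[simp] lemma eval_andP (φ ψ : Pattern σ) (v : Val A) :
    eval S (andP φ ψ) v = eval S φ v ∩ eval S ψ v := by
  rw [andP, eval_negP, eval_orP, eval_negP, eval_negP, compl_union, compl_compl, compl_compl]

lemma eval_imp_eq_univ_iff (φ ψ : Pattern σ) (v : Val A) :
    eval S (.imp φ ψ) v = univ ↔ eval S φ v ⊆ eval S ψ v := by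
  rw [eval, compl_univ_iff, sdiff_eq_empty]

lemma Ctx.eval_plug_eq_empty (C : Ctx σ) {δ : Pattern σ} {v : Val A} (h : eval S δ v = ∅) :
    eval S (C.plug δ) v = ∅ := by
  induction C with
  | hole => exact h
  | appL C ψ ih => simp [Ctx.plug, eval, ih]
  | appR ψ C ih => simp [Ctx.plug, eval, ih]

/-- `x` denotes a single point, which misses `φ` or `¬φ`; a context with an empty hole is empty. -/
lemma eval_plug_inter_plug_eq_empty (C₁ C₂ : Ctx σ) (φ : Pattern σ) (x : ℕ) (v : Val A) :
    eval S (C₁.plug (andP (.evar x) φ)) v ∩ eval S (C₂.plug (andP (.evar x) (negP φ))) v = ∅ := by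
  by_cases hx : v.e x ∈ eval S φ v
  · rw [Ctx.eval_plug_eq_empty S C₂ (by simp [eval, hx]), inter_empty]
  · rw [Ctx.eval_plug_eq_empty S C₁ (by simp [eval, hx]), empty_inter]

end Semantics

section FreeVariables

variable {σ A : Type} (S : AMLStructure σ A)

lemma eval_congr_of_fv (φ : Pattern σ) {v w : Val A}
    (he : ∀ n, Sum.inl n ∈ fv φ → v.e n = w.e n) (hs : ∀ N, Sum.inr N ∈ fv φ → v.s N = w.s N) :
    eval S φ v = eval S φ w := by
  induction φ generalizing v w with
  | evar n => simp [eval, he n (by simp [fv])]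
  | svar N => simp [eval, hs N (by simp [fv])]
  | const c => rfl
  | app φ ψ ihφ ihψ | imp φ ψ ihφ ihψ =>
    simp only [eval]
    rw [ihφ (fun n hn => he n (.inl hn)) (fun N hN => hs N (.inl hN)),
      ihψ (fun n hn => he n (.inr hn)) (fun N hN => hs N (.inr hN))]
  | ex x φ ih =>
    refine iUnion_congr fun a => ih (fun n hn => ?_) fun N hN => hs N ⟨hN, by simp⟩
    by_cases hnx : n = x
    · simp [hnx]
    · simpa [hnx] using he n ⟨hn, by simp [hnx]⟩
  | mu X φ ih =>
    refine congrArg sInter (ext fun B => ?_)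
    show eval S φ (v.updS X B) ⊆ B ↔ eval S φ (w.updS X B) ⊆ B
    rw [ih (v := v.updS X B) (w := w.updS X B) (fun n hn => he n ⟨hn, by simp⟩) fun N hN => ?_]
    by_cases hNX : N = X
    · simp [hNX]
    · simpa [hNX] using hs N ⟨hN, by simp [hNX]⟩

lemma eval_updE_of_notMem_fv {φ : Pattern σ} {x : ℕ} (hx : Sum.inl x ∉ fv φ) (v : Val A)
    (a : A) : eval S φ (v.updE x a) = eval S φ v :=
  eval_congr_of_fv S φ (fun n hn => by rw [Val.updE_e, if_neg (by rintro rfl; exact hx hn)])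
    fun _ _ => rfl

lemma eval_updS_of_notMem_fv {φ : Pattern σ} {X : ℕ} (hX : Sum.inr X ∉ fv φ) (v : Val A)
    (B : Set A) : eval S φ (v.updS X B) = eval S φ v :=
  eval_congr_of_fv S φ (fun _ _ => rfl)
    fun N hN => by rw [Val.updS_s, if_neg (by rintro rfl; exact hX hN)]

lemma eval_ex_updE_self (x : ℕ) (φ : Pattern σ) (v : Val A) (a : A) :
    eval S (.ex x φ) (v.updE x a) = eval S (.ex x φ) v :=
  eval_updE_of_notMem_fv S (by simp [fv]) v a

lemma eval_mu_updS_self (X : ℕ) (φ : Pattern σ) (v : Val A) (B : Set A) :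
    eval S (.mu X φ) (v.updS X B) = eval S (.mu X φ) v :=
  eval_updS_of_notMem_fv S (by simp [fv]) v B

lemma substS_of_notMem_fv (ψ : Pattern σ) {X : ℕ} {φ : Pattern σ} (hX : Sum.inr X ∉ fv φ) :
    substS ψ X φ = φ := by
  induction φ with
  | evar n => rfl
  | svar N => simp [substS, show N ≠ X by rintro rfl; simp [fv] at hX]
  | const c => rfl
  | app φ₁ φ₂ ih₁ ih₂ | imp φ₁ φ₂ ih₁ ih₂ =>
    simp only [fv, mem_union, not_or] at hX
    simp [substS, ih₁ hX.1, ih₂ hX.2]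
  | ex z φ ih => simp [substS, ih fun h => hX ⟨h, by simp⟩]
  | mu Z φ ih =>
    by_cases hZX : Z = X
    · simp [substS, hZX]
    · simp [substS, hZX, ih fun h => hX ⟨h, by simp [Ne.symm hZX]⟩]

lemma substE_of_notMem_fv (δ : Pattern σ) {x : ℕ} {φ : Pattern σ} (hx : Sum.inl x ∉ fv φ) :
    substE δ x φ = φ := by
  induction φ with
  | evar n => simp [substE, show n ≠ x by rintro rfl; simp [fv] at hx]
  | svar N => rfl
  | const c => rfl
  | app φ₁ φ₂ ih₁ ih₂ | imp φ₁ φ₂ ih₁ ih₂ =>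
    simp only [fv, mem_union, not_or] at hx
    simp [substE, ih₁ hx.1, ih₂ hx.2]
  | ex z φ ih =>
    by_cases hzx : z = x
    · simp [substE, hzx]
    · simp [substE, hzx, ih fun h => hx ⟨h, by simp [Ne.symm hzx]⟩]
  | mu Z φ ih => simp [substE, ih fun h => hx ⟨h, by simp⟩]

end FreeVariables

section Substitution

variable {σ A : Type} (S : AMLStructure σ A)

lemma eval_substS_of_notMem_fv (ψ : Pattern σ) {X : ℕ} {φ : Pattern σ}
    (hX : Sum.inr X ∉ fv φ) (v : Val A) :
    eval S (substS ψ X φ) v = eval S φ (v.updS X (eval S ψ v)) := by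
  rw [substS_of_notMem_fv ψ hX, eval_updS_of_notMem_fv S hX]

lemma eval_substE_of_notMem_fv (δ : Pattern σ) {x : ℕ} {φ : Pattern σ}
    (hx : Sum.inl x ∉ fv φ) (v : Val A) (a : A) :
    eval S (substE δ x φ) v = eval S φ (v.updE x a) := by
  rw [substE_of_notMem_fv δ hx, eval_updE_of_notMem_fv S hx]

lemma eval_substS {ψ : Pattern σ} {X : ℕ} {φ : Pattern σ} (hff : freeForS ψ X φ) (v : Val A) :
    eval S (substS ψ X φ) v = eval S φ (v.updS X (eval S ψ v)) := by
  induction φ generalizing v with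
  | evar n => rfl
  | svar N => by_cases hNX : N = X <;> simp [substS, eval, hNX]
  | const c => rfl
  | app φ₁ φ₂ ih₁ ih₂ | imp φ₁ φ₂ ih₁ ih₂ => simp only [substS, eval, ih₁ hff.1, ih₂ hff.2]
  | ex z φ ih =>
    obtain ⟨hcapture, hff⟩ := hff
    by_cases hX : Sum.inr X ∈ fv φ
    · refine iUnion_congr fun a => ?_
      rw [ih hff, eval_updE_of_notMem_fv S (hcapture hX)]
      rfl
    · exact eval_substS_of_notMem_fv S ψ (fun h : Sum.inr X ∈ fv (.ex z φ) => hX h.1) v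
  | mu Z φ ih =>
    by_cases hZX : Z = X
    · subst hZX
      simp only [substS, ↓reduceIte, eval_mu_updS_self]
    obtain ⟨hcapture, hff⟩ := hff.resolve_left hZX
    by_cases hX : Sum.inr X ∈ fv φ
    · simp only [substS, if_neg hZX]
      refine congrArg sInter (ext fun B => ?_)
      show eval S (substS ψ X φ) (v.updS Z B) ⊆ B ↔
        eval S φ ((v.updS X (eval S ψ v)).updS Z B) ⊆ B
      rw [ih hff, eval_updS_of_notMem_fv S (hcapture hX), Val.updS_comm v hZX]
    · exact eval_substS_of_notMem_fv S ψ (fun h : Sum.inr X ∈ fv (.mu Z φ) => hX h.1) v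

lemma eval_substE_evar {y x : ℕ} {φ : Pattern σ} (hff : freeForE (.evar y) x φ) (v : Val A) :
    eval S (substE (.evar y) x φ) v = eval S φ (v.updE x (v.e y)) := by
  induction φ generalizing v with
  | evar n => by_cases hnx : n = x <;> simp [substE, eval, hnx]
  | svar N => rfl
  | const c => rfl
  | app φ₁ φ₂ ih₁ ih₂ | imp φ₁ φ₂ ih₁ ih₂ => simp only [substE, eval, ih₁ hff.1, ih₂ hff.2]
  | ex z φ ih =>
    by_cases hzx : z = x
    · subst hzx
      simp only [substE, ↓reduceIte, eval_ex_updE_self]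
    obtain ⟨hcapture, hff⟩ := hff.resolve_left hzx
    by_cases hx : Sum.inl x ∈ fv φ
    · have hzy : z ≠ y := by rintro rfl; exact hcapture hx (by simp [fv])
      simp only [substE, if_neg hzx]
      refine iUnion_congr fun a => ?_
      rw [ih hff, Val.updE_e, if_neg hzy.symm, Val.updE_comm v hzx]
    · exact eval_substE_of_notMem_fv S _ (fun h : Sum.inl x ∈ fv (.ex z φ) => hx h.1) v _
  | mu Z φ ih =>
    refine congrArg sInter (ext fun B => ?_)
    show eval S (substE (.evar y) x φ) (v.updS Z B) ⊆ B ↔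
      eval S φ ((v.updE x (v.e y)).updS Z B) ⊆ B
    rw [ih hff.2]
    rfl

end Substitution

section Monotonicity

variable {σ A : Type} (S : AMLStructure σ A)

lemma eval_updS_monotone_antitone (X : ℕ) (φ : Pattern σ) (v : Val A) :
    (positiveIn X φ → Monotone fun B => eval S φ (v.updS X B)) ∧
    (negativeIn X φ → Antitone fun B => eval S φ (v.updS X B)) := by
  induction φ generalizing v with
  | evar n | const c => exact ⟨fun _ _ _ _ => subset_rfl, fun _ _ _ _ => subset_rfl⟩
  | svar N =>
    refine ⟨fun _ B C hBC => ?_, fun (hN : N ≠ X) => ?_⟩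
    · by_cases hNX : N = X <;> simp [eval, hNX, hBC]
    · simp [eval, hN, antitone_const]
  | app φ ψ ihφ ihψ =>
    exact ⟨fun ⟨hφ, hψ⟩ _ _ hBC => S.sapp_mono ((ihφ v).1 hφ hBC) ((ihψ v).1 hψ hBC),
      fun ⟨hφ, hψ⟩ _ _ hBC => S.sapp_mono ((ihφ v).2 hφ hBC) ((ihψ v).2 hψ hBC)⟩
  | imp φ ψ ihφ ihψ =>
    exact ⟨fun ⟨hφ, hψ⟩ _ _ hBC =>
        compl_subset_compl.2 (sdiff_subset_sdiff ((ihφ v).2 hφ hBC) ((ihψ v).1 hψ hBC)),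
      fun ⟨hφ, hψ⟩ _ _ hBC =>
        compl_subset_compl.2 (sdiff_subset_sdiff ((ihφ v).1 hφ hBC) ((ihψ v).2 hψ hBC))⟩
  | ex z φ ih =>
    exact ⟨fun h _ _ hBC => iUnion_mono fun a => (ih (v.updE z a)).1 h hBC,
      fun h _ _ hBC => iUnion_mono fun a => (ih (v.updE z a)).2 h hBC⟩
  | mu Z φ ih =>
    by_cases hZX : Z = X
    · subst hZX
      simp only [eval_mu_updS_self]
      exact ⟨fun _ => monotone_const, fun _ => antitone_const⟩
    refine ⟨fun h B C hBC => sInter_subset_sInter fun D hD => ?_,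
      fun h B C hBC => sInter_subset_sInter fun D hD => ?_⟩
    · have : eval S φ ((v.updS X B).updS Z D) ⊆ eval S φ ((v.updS X C).updS Z D) := by
        simpa only [Val.updS_comm v hZX] using (ih (v.updS Z D)).1 (h.resolve_left hZX) hBC
      exact this.trans hD
    · have : eval S φ ((v.updS X C).updS Z D) ⊆ eval S φ ((v.updS X B).updS Z D) := by
        simpa only [Val.updS_comm v hZX] using (ih (v.updS Z D)).2 (h.resolve_left hZX) hBC
      exact this.trans hD

lemma monotone_eval_updS {X : ℕ} {φ : Pattern σ} (h : positiveIn X φ) (v : Val A) :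
    Monotone fun B => eval S φ (v.updS X B) :=
  (eval_updS_monotone_antitone S X φ v).1 h

lemma eval_updS_eval_mu_subset {X : ℕ} {φ : Pattern σ} (h : positiveIn X φ) (v : Val A) :
    eval S φ (v.updS X (eval S (.mu X φ) v)) ⊆ eval S (.mu X φ) v :=
  (OrderHom.map_lfp ⟨_, monotone_eval_updS S h v⟩).le

lemma eval_mu_subset_of_subset {X : ℕ} {φ : Pattern σ} {v : Val A} {B : Set A}
    (h : eval S φ (v.updS X B) ⊆ B) : eval S (.mu X φ) v ⊆ B :=
  sInter_subset_of_mem h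

end Monotonicity

theorem Proof.eval_eq_univ {σ A : Type} [Nonempty A] {Γ : Set (Pattern σ)} {φ : Pattern σ}
    (h : Proof Γ φ) (S : AMLStructure σ A) (hΓ : ∀ γ ∈ Γ, ∀ v : Val A, eval S γ v = univ)
    (v : Val A) : eval S φ v = univ := by
  induction h generalizing v with
  | hyp hγ => exact hΓ _ hγ v
  | taut ht => exact ht A ‹_› (eval S · v) ⟨eval_botP S v, fun _ _ => rfl⟩
  | exQuant hff =>
    rw [eval_imp_eq_univ_iff, eval_substE_evar S hff]
    exact subset_iUnion (fun a => eval S _ (v.updE _ a)) _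
  | propBotL | propBotR => simp [eval]
  | propOrL => simp [eval, S.sapp_union_left]
  | propOrR => simp [eval, S.sapp_union_right]
  | propExL hx =>
    rw [eval_imp_eq_univ_iff]
    simp only [eval, S.sapp_iUnion_left, eval_updE_of_notMem_fv S hx, subset_rfl]
  | propExR hx =>
    rw [eval_imp_eq_univ_iff]
    simp only [eval, S.sapp_iUnion_right, eval_updE_of_notMem_fv S hx, subset_rfl]
  | preFixpoint hpos hff =>
    rw [eval_imp_eq_univ_iff, eval_substS S hff]
    exact eval_updS_eval_mu_subset S hpos v
  | existence => exact iUnion_eq_univ_iff.2 fun a => ⟨a, by simp [eval]⟩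
  | singleton => rw [eval_negP, eval_andP, eval_plug_inter_plug_eq_empty, compl_empty]
  | mp _ _ ih₁ ih₂ => exact univ_subset_iff.1 (ih₁ v ▸ (eval_imp_eq_univ_iff S _ _ v).1 (ih₂ v))
  | exRule hx _ ih =>
    rw [eval_imp_eq_univ_iff]
    refine iUnion_subset fun a => ?_
    rw [← eval_updE_of_notMem_fv S hx v a]
    exact (eval_imp_eq_univ_iff S _ _ _).1 (ih _)
  | framingL _ ih =>
    rw [eval_imp_eq_univ_iff]
    exact S.sapp_mono ((eval_imp_eq_univ_iff S _ _ v).1 (ih v)) subset_rfl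
  | framingR _ ih =>
    rw [eval_imp_eq_univ_iff]
    exact S.sapp_mono subset_rfl ((eval_imp_eq_univ_iff S _ _ v).1 (ih v))
  | svSubst hff _ ih => rw [eval_substS S hff]; exact ih _
  | knasterTarski hff _ ih =>
    rw [eval_imp_eq_univ_iff]
    exact eval_mu_subset_of_subset S (eval_substS S hff v ▸ (eval_imp_eq_univ_iff S _ _ v).1 (ih v))

theorem soundness {σ : Type} (Γ : Set (Pattern σ)) (φ : Pattern σ) (h : Proof Γ φ) :
    ∀ (A : Type), Nonempty A → ∀ S : AMLStructure σ A,
      (∀ γ ∈ Γ, ∀ v : Val A, eval S γ v = Set.univ) →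
      ∀ v : Val A, eval S φ v = Set.univ :=
  fun _ _ S hΓ v => h.eval_eq_univ S hΓ v
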